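/- Fix a prime ℓ and n ≥ 0. Then the number of partitions of n equals Σ_{ν ∈ Part(n,ℓ)} ∏_{i≥0} p_ℓ(m_{ℓ^i}(ν)), where p_ℓ(m) denotes the number of ℓ-regular partitions of m. -/

import Mathlib

/-- A function `f : ℕ → ℕ` is a partition of `m` if it is weakly decreasing,
has finite support, and its parts sum to `m`.  Here `f i` is the `(i+1)`-st part
`λ_{i+1}` of the partition. -/
def IsPartition (m : ℕ) (f : ℕ → ℕ) : Prop :=
  Antitone f ∧ (Function.support f).Finite ∧ ∑ᶠ i, f i = m

/-- The transpose partition: `ptranspose f j` is the `(j+1)`-st part `(fᵗ)_{j+1}`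
of the transpose, i.e. the number of indices `i` with `f i ≥ j + 1`. -/
noncomputable def ptranspose (f : ℕ → ℕ) : ℕ → ℕ :=
  fun j => {i : ℕ | j + 1 ≤ f i}.ncard

/-- `pmult f j` is the multiplicity `m_j(f)` of `j ≥ 1` as a part of `f`. -/
noncomputable def pmult (f : ℕ → ℕ) (j : ℕ) : ℕ :=
  {i : ℕ | f i = j}.ncard

/-- All (nonzero) parts of `f` are powers of `ℓ`. -/
def PartsPowersOf (ℓ : ℕ) (f : ℕ → ℕ) : Prop :=
  ∀ i, f i ≠ 0 → ∃ k, f i = ℓ ^ k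

/-- `f` is `ℓ`-regular: every part `j ≥ 1` has multiplicity `< ℓ`. -/
def IsRegularPartition (ℓ : ℕ) (f : ℕ → ℕ) : Prop :=
  ∀ j, 1 ≤ j → pmult f j < ℓ

/-- The combinatorial generalized Springer map: given a tuple `lam` where `lam i`
is (meant to be) an `ℓ`-regular partition of `m_{ℓ^i}(ν)`, it returns the
partition `Σ_{i ≥ 0} ℓ^i · (lam i)ᵗ` (componentwise operations). -/
noncomputable def psiCo (ℓ : ℕ) (lam : ℕ → ℕ → ℕ) : ℕ → ℕ :=
  fun j => ∑ᶠ i, ℓ ^ i * ptranspose (lam i) j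

/-!
A partition of `n` is recorded by its multiplicity function `e : ℕ+ →₀ ℕ`, of weight
`∑ v * e v = n`; the partition itself is recovered as the transpose of the tail sums of `e`.
Writing every multiplicity in base `ℓ` splits `e` into digit layers `d_i` with all entries `< ℓ`,
that is, into `ℓ`-regular partitions of sizes `m_i` with `∑ ℓ ^ i * m_i = n`, and the layers
determine `e`. The vector `(m_i)` is the multiplicity vector of the partition `ν` of `n` into
powers of `ℓ` with `m_{ℓ^i}(ν) = m_i`, so the partitions of `n` lying over `ν` are counted by
`∏ p_ℓ(m_{ℓ^i}(ν))`.
-/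

open Function Finset

section Transpose

variable {f : ℕ → ℕ}

theorem finite_setOf_succ_le (hfin : (support f).Finite) (j : ℕ) : {i | j + 1 ≤ f i}.Finite :=
  hfin.subset fun i hi => by simp only [Set.mem_ofPred_eq] at hi; simp only [mem_support]; omega

theorem lt_ptranspose_iff (hf : Antitone f) (hfin : (support f).Finite) {i j : ℕ} :
    i < ptranspose f j ↔ j + 1 ≤ f i := by
  constructor
  · intro hi
    by_contra! hlt
    have hsub : {k | j + 1 ≤ f k} ⊆ Set.Iio i := fun k (hk : j + 1 ≤ f k) => by
      by_contra! hik
      have := hf (not_lt.1 hik)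
      omega
    have := Set.ncard_le_ncard hsub (Set.finite_Iio i)
    rw [Set.ncard_Iio_nat] at this
    exact absurd hi (by unfold ptranspose; omega)
  · intro hle
    have := Set.ncard_le_ncard (s := Set.Iic i) (fun k hk => hle.trans (hf hk))
      (finite_setOf_succ_le hfin j)
    rwa [Set.ncard_Iic_nat] at this

theorem antitone_ptranspose (hfin : (support f).Finite) : Antitone (ptranspose f) :=
  fun a b hab => Set.ncard_le_ncard (fun k (hk : b + 1 ≤ f k) => show a + 1 ≤ f k by omega)
    (finite_setOf_succ_le hfin a)

theorem finite_support_ptranspose (hf : Antitone f) (hfin : (support f).Finite) :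
    (support (ptranspose f)).Finite :=
  (Set.finite_Iio (f 0)).subset fun _ hj =>
    Nat.lt_of_succ_le <| (lt_ptranspose_iff hf hfin).1 (Nat.pos_of_ne_zero hj)

theorem ptranspose_ptranspose (hf : Antitone f) (hfin : (support f).Finite) :
    ptranspose (ptranspose f) = f := by
  funext i
  have : {j | i + 1 ≤ ptranspose f j} = Set.Iio (f i) := by
    ext j
    exact (lt_ptranspose_iff hf hfin).trans Nat.add_one_le_iff
  rw [ptranspose, this, Set.ncard_Iio_nat]

theorem pmult_ptranspose_succ (hf : Antitone f) (hfin : (support f).Finite) (j : ℕ) :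
    pmult (ptranspose f) (j + 1) = f j - f (j + 1) := by
  have : {i | ptranspose f i = j + 1} = Set.Ico (f (j + 1)) (f j) := by
    ext i
    have h₁ := lt_ptranspose_iff hf hfin (i := j) (j := i)
    have h₂ := lt_ptranspose_iff hf hfin (i := j + 1) (j := i)
    simp only [Set.mem_ofPred_eq, Set.mem_Ico]
    omega
  rw [pmult, this, Set.ncard_Ico_nat]

theorem pmult_succ_eq_sub (hf : Antitone f) (hfin : (support f).Finite) (j : ℕ) :
    pmult f (j + 1) = ptranspose f j - ptranspose f (j + 1) := by
  conv_lhs => rw [← ptranspose_ptranspose hf hfin]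
  exact pmult_ptranspose_succ (antitone_ptranspose hfin) (finite_support_ptranspose hf hfin) j

end Transpose

theorem exists_forall_ge_eq_zero {g : ℕ → ℕ} (hg : (support g).Finite) :
    ∃ N, ∀ j, N ≤ j → g j = 0 := by
  obtain ⟨B, hB⟩ := hg.bddAbove
  exact ⟨B + 1, fun j hj => not_ne_iff.1 fun h => absurd (hB h) (by omega)⟩

section PartsAbove

/-- The transpose of the partition with multiplicities `e`. -/
def partsAbove (e : ℕ+ →₀ ℕ) (j : ℕ) : ℕ := ∑ v ∈ e.support.filter fun v : ℕ+ => j < v, e v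

variable (e : ℕ+ →₀ ℕ)

theorem partsAbove_eq_add (j : ℕ) : partsAbove e j = e j.succPNat + partsAbove e (j + 1) := by
  have hsplit : ∀ v : ℕ+, (if j < (v : ℕ) then e v else 0) =
      (if j.succPNat = v then e v else 0) + (if j + 1 < (v : ℕ) then e v else 0) := by
    intro v
    have : j.succPNat = v ↔ (v : ℕ) = j + 1 := by rw [← PNat.coe_inj, Nat.succPNat_coe, eq_comm]
    by_cases h₁ : (v : ℕ) = j + 1 <;> by_cases h₂ : j + 1 < (v : ℕ) <;>
      simp [this, h₁, h₂] <;> omega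
  simp only [partsAbove, Finset.sum_filter, hsplit, Finset.sum_add_distrib, Finset.sum_ite_eq,
    Finsupp.mem_support_iff, ne_eq, ite_not]
  split_ifs with h <;> simp [h]

theorem antitone_partsAbove : Antitone (partsAbove e) :=
  antitone_nat_of_succ_le fun j => (partsAbove_eq_add e j).symm ▸ Nat.le_add_left _ _

theorem finite_support_partsAbove : (support (partsAbove e)).Finite :=
  (Set.finite_Iio (e.support.sup PNat.val)).subset fun j hj => by
    by_contra! hle
    refine hj (Finset.sum_eq_zero fun v hv => ?_)
    have := Finset.le_sup (f := PNat.val) (Finset.mem_filter.1 hv).1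
    simp only [Set.mem_Iio, not_lt] at hle
    exact absurd (Finset.mem_filter.1 hv).2 (by omega)

theorem eq_partsAbove {t : ℕ → ℕ} (ht : (support t).Finite)
    (h : ∀ j, t j = e j.succPNat + t (j + 1)) : t = partsAbove e := by
  obtain ⟨N₁, hN₁⟩ := exists_forall_ge_eq_zero ht
  obtain ⟨N₂, hN₂⟩ := exists_forall_ge_eq_zero (finite_support_partsAbove e)
  suffices ∀ k j, N₁ + N₂ ≤ j + k → t j = partsAbove e j from
    funext fun j => this (N₁ + N₂) j (by omega)
  intro k
  induction k with
  | zero => exact fun j hj => by rw [hN₁ j (by omega), hN₂ j (by omega)]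
  | succ k ih => exact fun j hj => by rw [h, partsAbove_eq_add, ih (j + 1) (by omega)]

end PartsAbove

section PartitionMultiplicities

variable {f : ℕ → ℕ}

theorem pmult_eq_card_filter (hfin : (support f).Finite) (v : ℕ+) :
    pmult f v = #{i ∈ hfin.toFinset | f i = v} := by
  rw [pmult, ← Set.ncard_coe_finset]
  congr 1
  ext i
  simp only [Set.mem_ofPred_eq, coe_filter, Set.Finite.mem_toFinset, mem_support]
  exact ⟨fun h => ⟨h ▸ v.ne_zero, h⟩, And.right⟩

theorem finite_support_pmult (hfin : (support f).Finite) :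
    (support fun v : ℕ+ => pmult f v).Finite :=
  ((hfin.image f).preimage PNat.coe_injective.injOn).subset fun v hv => by
    obtain ⟨i, hi : f i = v⟩ := Set.nonempty_of_ncard_ne_zero hv
    exact ⟨i, fun h => v.ne_zero (hi.symm.trans h), hi⟩

noncomputable def multiplicities (f : ℕ → ℕ) (hfin : (support f).Finite) : ℕ+ →₀ ℕ :=
  Finsupp.ofSupportFinite _ (finite_support_pmult hfin)

@[simp]
theorem multiplicities_apply (hfin : (support f).Finite) (v : ℕ+) :
    multiplicities f hfin v = pmult f v := rfl

theorem finsum_eq_weight_multiplicities (hfin : (support f).Finite) :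
    ∑ᶠ i, f i = Finsupp.weight PNat.val (multiplicities f hfin) := by
  classical
  have hmaps : ∀ i ∈ hfin.toFinset, f i ∈ (multiplicities f hfin).support.map
      ⟨PNat.val, PNat.coe_injective⟩ := fun i hi => by
    refine mem_map.2 ⟨(f i).toPNat (Nat.pos_of_ne_zero (mem_support.1 (hfin.mem_toFinset.1 hi))),
      ?_, rfl⟩
    rw [Finsupp.mem_support_iff, multiplicities_apply, pmult_eq_card_filter hfin]
    exact card_ne_zero.2 ⟨i, mem_filter.2 ⟨hi, rfl⟩⟩
  rw [finsum_eq_sum_of_support_subset f (s := hfin.toFinset) (by simp),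
    ← sum_fiberwise_of_maps_to hmaps, sum_map, Finsupp.weight_apply, Finsupp.sum]
  refine sum_congr rfl fun v _ => ?_
  rw [sum_congr rfl fun i hi => (mem_filter.1 hi).2, sum_const, multiplicities_apply,
    pmult_eq_card_filter hfin]
  rfl

end PartitionMultiplicities

noncomputable def ofMultiplicities (e : ℕ+ →₀ ℕ) : ℕ → ℕ := ptranspose (partsAbove e)

theorem pmult_ofMultiplicities (e : ℕ+ →₀ ℕ) (v : ℕ+) : pmult (ofMultiplicities e) v = e v := by
  obtain ⟨j, rfl⟩ : ∃ j, j.succPNat = v := ⟨v.natPred, v.succPNat_natPred⟩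
  rw [Nat.succPNat_coe, ofMultiplicities,
    pmult_ptranspose_succ (antitone_partsAbove e) (finite_support_partsAbove e),
    partsAbove_eq_add e j, Nat.add_sub_cancel]

theorem isPartition_ofMultiplicities (e : ℕ+ →₀ ℕ) :
    IsPartition (Finsupp.weight PNat.val e) (ofMultiplicities e) := by
  have hfin : (support (ofMultiplicities e)).Finite :=
    finite_support_ptranspose (antitone_partsAbove e) (finite_support_partsAbove e)
  refine ⟨antitone_ptranspose (finite_support_partsAbove e), hfin, ?_⟩
  rw [finsum_eq_weight_multiplicities hfin]
  congr
  ext v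
  exact pmult_ofMultiplicities e v

theorem ofMultiplicities_multiplicities {f : ℕ → ℕ} (hf : Antitone f)
    (hfin : (support f).Finite) : ofMultiplicities (multiplicities f hfin) = f := by
  have hrec : ∀ j, ptranspose f j =
      multiplicities f hfin j.succPNat + ptranspose f (j + 1) := fun j => by
    rw [multiplicities_apply, Nat.succPNat_coe, pmult_succ_eq_sub hf hfin]
    have := antitone_ptranspose hfin (Nat.le_add_right j 1)
    omega
  rw [ofMultiplicities, ← eq_partsAbove _ (finite_support_ptranspose hf hfin) hrec,
    ptranspose_ptranspose hf hfin]

noncomputable def partitionEquiv (n : ℕ) :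
    {f // IsPartition n f} ≃ {e : ℕ+ →₀ ℕ // Finsupp.weight PNat.val e = n} where
  toFun f := ⟨multiplicities f.1 f.2.2.1,
    (finsum_eq_weight_multiplicities f.2.2.1).symm.trans f.2.2.2⟩
  invFun e := ⟨ofMultiplicities e.1, by simpa only [e.2] using isPartition_ofMultiplicities e.1⟩
  left_inv f := Subtype.ext (ofMultiplicities_multiplicities f.2.1 f.2.2.1)
  right_inv e := Subtype.ext (Finsupp.ext (pmult_ofMultiplicities e.1))

noncomputable def partitionEquivOfIff (n : ℕ) {P : (ℕ → ℕ) → Prop} {Q : (ℕ+ →₀ ℕ) → Prop}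
    (h : ∀ f (hf : IsPartition n f), P f ↔ Q (multiplicities f hf.2.1)) :
    {f // IsPartition n f ∧ P f} ≃ {e : ℕ+ →₀ ℕ // Finsupp.weight PNat.val e = n ∧ Q e} :=
  (Equiv.subtypeSubtypeEquivSubtypeInter _ P).symm.trans <|
    ((partitionEquiv n).subtypeEquiv fun f => h f.1 f.2).trans
      (Equiv.subtypeSubtypeEquivSubtypeInter _ Q)

noncomputable def regularPartitionEquiv (ℓ n : ℕ) :
    {f // IsPartition n f ∧ IsRegularPartition ℓ f} ≃
      {e : ℕ+ →₀ ℕ // Finsupp.weight PNat.val e = n ∧ ∀ v, e v < ℓ} :=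
  partitionEquivOfIff n fun _ _ => ⟨fun h v => h v v.pos, fun h j hj => h ⟨j, hj⟩⟩

theorem Finsupp.weight_embDomain {σ τ : Type*} (w : σ → ℕ) (φ : τ ↪ σ) (m : τ →₀ ℕ) :
    weight w (embDomain φ m) = weight (w ∘ φ) m := by
  simp [weight_apply, sum_embDomain]

noncomputable def weightEqEmbDomainEquiv {σ τ : Type*} (w : σ → ℕ) (φ : τ ↪ σ) (n : ℕ) :
    {e : σ →₀ ℕ // Finsupp.weight w e = n ∧ ↑e.support ⊆ Set.range φ} ≃
      {m : τ →₀ ℕ // Finsupp.weight (w ∘ φ) m = n} where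
  toFun e := ⟨Finsupp.comapDomain φ e.1 φ.injective.injOn, by
    rw [← Finsupp.weight_embDomain, Finsupp.embDomain_comapDomain e.2.2, e.2.1]⟩
  invFun m := ⟨Finsupp.embDomain φ m, by rw [Finsupp.weight_embDomain, m.2], by
    rw [Finsupp.support_embDomain, coe_map]
    exact Set.image_subset_range _ _⟩
  left_inv e := Subtype.ext (Finsupp.embDomain_comapDomain e.2.2)
  right_inv m := Subtype.ext (Finsupp.comapDomain_embDomain φ m.1)

def powEmbedding (ℓ : ℕ) (hℓ : 2 ≤ ℓ) : ℕ ↪ ℕ+ :=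
  ⟨fun k => ⟨ℓ ^ k, pow_pos (by omega) k⟩,
    fun _ _ h => Nat.pow_right_injective hℓ (congrArg PNat.val h)⟩

theorem partsPowersOf_iff {ℓ : ℕ} (hℓ : 2 ≤ ℓ) {f : ℕ → ℕ} (hfin : (support f).Finite) :
    PartsPowersOf ℓ f ↔ ↑(multiplicities f hfin).support ⊆ Set.range (powEmbedding ℓ hℓ) := by
  constructor
  · intro h v hv
    obtain ⟨i, hi : f i = v⟩ := Set.nonempty_of_ncard_ne_zero (Finsupp.mem_support_iff.1 hv)
    obtain ⟨k, hk⟩ := h i (hi ▸ v.ne_zero)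
    exact ⟨k, PNat.eq (hk.symm.trans hi)⟩
  · intro h i hi
    have hv : (f i).toPNat (Nat.pos_of_ne_zero hi) ∈ (multiplicities f hfin).support := by
      rw [Finsupp.mem_support_iff, multiplicities_apply, pmult_eq_card_filter hfin]
      exact card_ne_zero.2 ⟨i, mem_filter.2 ⟨hfin.mem_toFinset.2 hi, rfl⟩⟩
    obtain ⟨k, hk⟩ := h hv
    exact ⟨k, (congrArg PNat.val hk).symm⟩

noncomputable def powersPartitionEquiv (ℓ : ℕ) (hℓ : 2 ≤ ℓ) (n : ℕ) :
    {g // IsPartition n g ∧ PartsPowersOf ℓ g} ≃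
      {m : ℕ →₀ ℕ // Finsupp.weight (ℓ ^ ·) m = n} :=
  (partitionEquivOfIff n fun _ hg => partsPowersOf_iff hℓ hg.2.1).trans
    (weightEqEmbDomainEquiv PNat.val (powEmbedding ℓ hℓ) n)

theorem powersPartitionEquiv_apply (ℓ : ℕ) (hℓ : 2 ≤ ℓ) (n : ℕ)
    (ν : {g // IsPartition n g ∧ PartsPowersOf ℓ g}) (i : ℕ) :
    (powersPartitionEquiv ℓ hℓ n ν).1 i = pmult ν.1 (ℓ ^ i) := rfl

theorem Nat.sum_range_pow_mul_div_pow_mod_self {ℓ N x : ℕ} (hx : x < ℓ ^ N) :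
    ∑ i ∈ range N, ℓ ^ i * (x / ℓ ^ i % ℓ) = x := by
  induction N generalizing x with
  | zero => simp_all
  | succ N ih =>
    have hℓ : 0 < ℓ := Nat.pos_of_ne_zero fun h => by simp [h] at hx
    rw [sum_range_succ']
    simp_rw [pow_succ', mul_assoc, ← Nat.div_div_eq_div_mul, ← mul_sum]
    rw [ih ((Nat.div_lt_iff_lt_mul hℓ).2 (by rwa [pow_succ] at hx))]
    simp [Nat.div_add_mod]

theorem Nat.sum_range_pow_mul_div_pow_mod {ℓ N : ℕ} {a : ℕ → ℕ} (ha : ∀ i, a i < ℓ)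
    (hN : ∀ i, N ≤ i → a i = 0) (k : ℕ) :
    (∑ i ∈ range N, ℓ ^ i * a i) / ℓ ^ k % ℓ = a k := by
  induction N generalizing a k with
  | zero => simp [hN k (Nat.zero_le k)]
  | succ N ih =>
    have hℓ : 0 < ℓ := (Nat.zero_le _).trans_lt (ha 0)
    rw [sum_range_succ']
    simp_rw [pow_succ', mul_assoc, ← mul_sum]
    cases k with
    | zero => simp [Nat.mod_eq_of_lt (ha 0)]
    | succ k =>
      rw [pow_succ', ← Nat.div_div_eq_div_mul, pow_zero, one_mul, Nat.mul_add_div hℓ,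
        Nat.div_eq_of_lt (ha 0), add_zero]
      exact ih (fun i => ha (i + 1)) (fun i hi => hN (i + 1) (by omega)) k

theorem Nat.sum_pow_mul_div_pow_mod {ℓ : ℕ} {a : ℕ → ℕ} {s : Finset ℕ} (ha : ∀ i, a i < ℓ)
    (hs : ∀ i ∉ s, a i = 0) (k : ℕ) :
    (∑ i ∈ s, ℓ ^ i * a i) / ℓ ^ k % ℓ = a k := by
  have hsub : s ⊆ range (s.sup id + 1) := fun i hi =>
    mem_range.2 (Nat.lt_succ_of_le (le_sup (f := id) hi))
  rw [sum_subset hsub fun i _ hi => by rw [hs i hi, mul_zero]]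
  exact Nat.sum_range_pow_mul_div_pow_mod ha
    (fun i hi => hs i fun his => absurd (mem_range.1 (hsub his)) (by omega)) k

theorem Nat.le_of_div_pow_mod_ne_zero {ℓ i x : ℕ} (h : x / ℓ ^ i % ℓ ≠ 0) : i ≤ x := by
  rcases i with _ | i
  · exact Nat.zero_le x
  obtain _ | _ | ℓ := ℓ
  · simp at h
  · simp [Nat.mod_one] at h
  · have hle : (ℓ + 2) ^ (i + 1) ≤ x := by
      by_contra! hlt
      exact h (by rw [Nat.div_eq_of_lt hlt, Nat.zero_mod])
    exact ((Nat.lt_pow_self (by omega)).trans_le hle).le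

section DigitLayers

variable {σ : Type*} (ℓ : ℕ)

noncomputable def digitLayer (i : ℕ) (e : σ →₀ ℕ) : σ →₀ ℕ :=
  e.mapRange (fun x => x / ℓ ^ i % ℓ) (by simp)

@[simp]
theorem digitLayer_apply (i : ℕ) (e : σ →₀ ℕ) (s : σ) : digitLayer ℓ i e s = e s / ℓ ^ i % ℓ :=
  rfl

theorem digitLayer_apply_lt (hℓ : 0 < ℓ) (i : ℕ) (e : σ →₀ ℕ) (s : σ) : digitLayer ℓ i e s < ℓ :=
  Nat.mod_lt _ hℓ

theorem sum_digitLayer {e : σ →₀ ℕ} {N : ℕ} (hN : ∀ s, e s < ℓ ^ N) :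
    ∑ i ∈ range N, ℓ ^ i • digitLayer ℓ i e = e := by
  ext s
  simp [Finsupp.finsetSum_apply, Nat.sum_range_pow_mul_div_pow_mod_self (hN s)]

theorem digitLayer_sum {d : ℕ → σ →₀ ℕ} {S : Finset ℕ} (hd : ∀ i s, d i s < ℓ)
    (hS : ∀ i ∉ S, d i = 0) (k : ℕ) : digitLayer ℓ k (∑ i ∈ S, ℓ ^ i • d i) = d k := by
  ext s
  have hS' : ∀ i ∉ S, d i s = 0 := fun i hi => by rw [hS i hi, Finsupp.zero_apply]
  simp [Finsupp.finsetSum_apply, Nat.sum_pow_mul_div_pow_mod (fun i => hd i s) hS']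

theorem lt_pow_degree_succ (hℓ : 2 ≤ ℓ) (e : σ →₀ ℕ) (s : σ) : e s < ℓ ^ (e.degree + 1) :=
  (e.le_degree s).trans_lt (Nat.lt_succ_self _ |>.trans (Nat.lt_pow_self hℓ))

noncomputable def layerWeights (w : σ → ℕ) (e : σ →₀ ℕ) : ℕ →₀ ℕ :=
  Finsupp.onFinset (range (e.degree + 1)) (fun i => Finsupp.weight w (digitLayer ℓ i e))
    fun i hi => by
      obtain ⟨s, hs⟩ : ∃ s, digitLayer ℓ i e s ≠ 0 := by
        by_contra! h
        exact hi (by rw [show digitLayer ℓ i e = 0 from Finsupp.ext h, map_zero])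
      exact mem_range.2 <|
        Nat.lt_succ_of_le ((Nat.le_of_div_pow_mod_ne_zero hs).trans (e.le_degree s))

variable {ℓ} {w : σ → ℕ}

theorem layerWeights_apply (e : σ →₀ ℕ) (i : ℕ) :
    layerWeights ℓ w e i = Finsupp.weight w (digitLayer ℓ i e) := rfl

theorem weight_layerWeights (hℓ : 2 ≤ ℓ) (e : σ →₀ ℕ) :
    Finsupp.weight (ℓ ^ ·) (layerWeights ℓ w e) = Finsupp.weight w e := by
  conv_rhs => rw [← sum_digitLayer ℓ (lt_pow_degree_succ ℓ hℓ e)]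
  rw [map_sum, Finsupp.weight_apply, Finsupp.sum_of_support_subset (layerWeights ℓ w e)
    (s := range (e.degree + 1)) Finsupp.support_onFinset_subset _ (by simp)]
  simp [layerWeights_apply, mul_comm]

end DigitLayers

section Counting

theorem Nat.card_eq_finsum_card_fiber {α β : Type*} [Finite α] [Finite β] (g : α → β) :
    Nat.card α = ∑ᶠ b, Nat.card {a // g a = b} := by
  have := Fintype.ofFinite β
  rw [← Nat.card_congr (Equiv.sigmaFiberEquiv g), Nat.card_sigma, finsum_eq_sum_of_fintype]

theorem Nat.card_pi_eq_finprod {ι : Type*} {β : ι → Type*} (s : Finset ι)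
    (hs : ∀ i ∉ s, Nat.card (β i) = 1) : Nat.card (∀ i, β i) = ∏ᶠ i, Nat.card (β i) := by
  classical
  have hout : Nat.card (∀ i : {i // i ∉ s}, β i) = 1 := by
    have h (i : {i // i ∉ s}) := Nat.card_eq_one_iff_unique.1 (hs i.1 i.2)
    exact Nat.card_eq_one_iff_unique.2
      ⟨⟨fun f g => funext fun i => (h i).1.elim _ _⟩, ⟨fun i => (h i).2.some⟩⟩
  rw [Nat.card_congr (Equiv.piEquivPiSubtypeProd (· ∈ s) β), Nat.card_prod, hout, mul_one,
    Nat.card_pi, finprod_eq_prod_of_mulSupport_subset _ (s := s) fun i hi => ?_]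
  · exact (prod_subtype s (fun _ => Iff.rfl) (fun i => Nat.card (β i))).symm
  · by_contra his
    exact hi (hs i his)

variable {σ : Type*} {w : σ → ℕ}

theorem eq_zero_of_weight_eq_zero (hw : ∀ s, w s ≠ 0) {d : σ →₀ ℕ}
    (hd : Finsupp.weight w d = 0) : d = 0 :=
  Finsupp.ext fun s => Nat.le_zero.1 (hd ▸ Finsupp.le_weight w (hw s) d)

theorem eq_zero_of_weight_eq_of_notMem_support (hw : ∀ s, w s ≠ 0) {m : ℕ →₀ ℕ} {i : ℕ}
    {d : σ →₀ ℕ} (hd : Finsupp.weight w d = m i) (hi : i ∉ m.support) : d = 0 :=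
  eq_zero_of_weight_eq_zero hw (hd.trans (Finsupp.notMem_support_iff.1 hi))

theorem card_weight_eq_zero_and_lt (hw : ∀ s, w s ≠ 0) {ℓ : ℕ} (hℓ : 0 < ℓ) :
    Nat.card {d : σ →₀ ℕ // Finsupp.weight w d = 0 ∧ ∀ s, d s < ℓ} = 1 :=
  Nat.card_eq_one_iff_unique.2 ⟨⟨fun d d' => Subtype.ext <|
    (eq_zero_of_weight_eq_zero hw d.2.1).trans (eq_zero_of_weight_eq_zero hw d'.2.1).symm⟩,
    ⟨⟨0, map_zero _, fun _ => hℓ⟩⟩⟩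

theorem finite_setOf_weight_eq (hw : ∀ s, w s ≠ 0) {n : ℕ} (hfin : {s | w s ≤ n}.Finite) :
    {e : σ →₀ ℕ | Finsupp.weight w e = n}.Finite := by
  classical
  refine (Set.finite_Iic (Finsupp.indicator hfin.toFinset fun _ _ => n)).subset fun e he => ?_
  rw [Set.mem_Iic, Finsupp.le_iff]
  intro s hs
  have hs' : s ∈ hfin.toFinset :=
    hfin.mem_toFinset.2 (he ▸ Finsupp.le_weight_of_ne_zero' w (Finsupp.mem_support_iff.1 hs))
  rw [Finsupp.indicator_of_mem hs']
  exact he ▸ Finsupp.le_weight w (hw s) e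

variable {ℓ : ℕ}

noncomputable def layerWeightsFiberEquiv (hℓ : 2 ≤ ℓ) (hw : ∀ s, w s ≠ 0) (m : ℕ →₀ ℕ) :
    {e : σ →₀ ℕ // layerWeights ℓ w e = m} ≃
      ∀ i, {d : σ →₀ ℕ // Finsupp.weight w d = m i ∧ ∀ s, d s < ℓ} where
  toFun e i := ⟨digitLayer ℓ i e.1, by rw [← layerWeights_apply, e.2],
    digitLayer_apply_lt ℓ (by omega) i e.1⟩
  invFun F := ⟨∑ i ∈ m.support, ℓ ^ i • (F i).1, by
    ext k
    rw [layerWeights_apply, digitLayer_sum ℓ (fun i => (F i).2.2)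
      (fun i => eq_zero_of_weight_eq_of_notMem_support hw (F i).2.1), (F k).2.1]⟩
  left_inv e := by
    obtain ⟨e, rfl⟩ := e
    refine Subtype.ext ?_
    conv_rhs => rw [← sum_digitLayer ℓ (lt_pow_degree_succ ℓ hℓ e)]
    refine sum_subset (Finsupp.support_onFinset_subset : (layerWeights ℓ w e).support ⊆ _)
      fun i _ hi => ?_
    change ℓ ^ i • digitLayer ℓ i e = 0
    rw [eq_zero_of_weight_eq_zero hw (Finsupp.notMem_support_iff.1 hi), smul_zero]
  right_inv F := funext fun k => Subtype.ext <| digitLayer_sum ℓ (fun i => (F i).2.2)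
    (fun i => eq_zero_of_weight_eq_of_notMem_support hw (F i).2.1) k

theorem card_weight_eq_finsum_prod (hℓ : 2 ≤ ℓ) (hw : ∀ s, w s ≠ 0)
    (hfin : ∀ n, {s | w s ≤ n}.Finite) (n : ℕ) :
    Nat.card {e : σ →₀ ℕ // Finsupp.weight w e = n} =
      ∑ᶠ m : {m : ℕ →₀ ℕ // Finsupp.weight (ℓ ^ ·) m = n},
        ∏ᶠ i, Nat.card {d : σ →₀ ℕ // Finsupp.weight w d = m.1 i ∧ ∀ s, d s < ℓ} := by
  have : Finite {e : σ →₀ ℕ // Finsupp.weight w e = n} :=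
    (finite_setOf_weight_eq hw (hfin n)).to_subtype
  have : Finite {m : ℕ →₀ ℕ // Finsupp.weight (ℓ ^ ·) m = n} :=
    (finite_setOf_weight_eq (fun _ => pow_ne_zero _ (by omega)) <|
      (Set.finite_Iic n).subset fun i (hi : ℓ ^ i ≤ n) =>
        (Nat.lt_pow_self hℓ).le.trans hi).to_subtype
  rw [Nat.card_eq_finsum_card_fiber fun e : {e : σ →₀ ℕ // Finsupp.weight w e = n} =>
    (⟨layerWeights ℓ w e.1, (weight_layerWeights hℓ e.1).trans e.2⟩ :
      {m : ℕ →₀ ℕ // Finsupp.weight (ℓ ^ ·) m = n})]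
  refine finsum_congr fun m => ?_
  have hfiber : {e : {e : σ →₀ ℕ // Finsupp.weight w e = n} // layerWeights ℓ w e.1 = m.1} ≃
      {e : σ →₀ ℕ // layerWeights ℓ w e = m.1} :=
    Equiv.subtypeSubtypeEquivSubtype fun {e} (h : layerWeights ℓ w e = m.1) => by
      rw [← weight_layerWeights hℓ, h, m.2]
  rw [Nat.card_congr ((Equiv.subtypeEquivRight fun e => Subtype.ext_iff).trans
    (hfiber.trans (layerWeightsFiberEquiv hℓ hw m.1)))]
  refine Nat.card_pi_eq_finprod m.1.support fun i hi => ?_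
  rw [Finsupp.notMem_support_iff.1 hi]
  exact card_weight_eq_zero_and_lt hw (by omega)

end Counting

/-- The number of partitions of `n` equals
`Σ_{ν ∈ Part(n,ℓ)} ∏_{i≥0} p_ℓ(m_{ℓ^i}(ν))`, where `p_ℓ(m)` is the number of
`ℓ`-regular partitions of `m`. -/
theorem card_partitions_eq_sum_prod (ℓ n : ℕ) (hℓ : ℓ.Prime) :
    Nat.card {f : ℕ → ℕ // IsPartition n f} =
      ∑ᶠ ν : {g : ℕ → ℕ // IsPartition n g ∧ PartsPowersOf ℓ g},
        ∏ᶠ i : ℕ,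
          Nat.card {f : ℕ → ℕ //
            IsPartition (pmult ν.1 (ℓ ^ i)) f ∧ IsRegularPartition ℓ f} := by
  rw [Nat.card_congr (partitionEquiv n),
    card_weight_eq_finsum_prod hℓ.two_le (fun v => v.ne_zero)
      (fun k => (Set.finite_Iic k).preimage (f := PNat.val) PNat.coe_injective.injOn) n,
    ← finsum_comp_equiv (powersPartitionEquiv ℓ hℓ.two_le n)]
  refine finsum_congr fun ν => finprod_congr fun i => ?_
  rw [powersPartitionEquiv_apply]
  exact (Nat.card_congr (regularPartitionEquiv ℓ _)).symm
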